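/- Let A ∈ ℝ^{d×n} have orthonormal columns a₁,…,aₙ, and let x ∈ ℝⁿ be a random vector with E[xᵢ⁴] = 1 for all i, E[xᵢxⱼxₖx_ℓ] = 0 unless xᵢxⱼxₖx_ℓ is a square, and E[xᵢ²xⱼ²] ≤ τ for i ≠ j. Then, viewing E[(Ax)^{⊗4}] as a d²×d² matrix (flattening along modes {1,2},{3,4}), E[(Ax)^{⊗4}] = Σᵢ (aᵢ⊗aᵢ)(aᵢ⊗aᵢ)ᵀ + Σ_{i≠j} E[xᵢ²xⱼ²]·((aᵢ⊗aᵢ)(aⱼ⊗aⱼ)ᵀ + (aᵢaᵢᵀ)⊗(aⱼaⱼᵀ) + (aⱼaᵢᵀ)⊗(aᵢaⱼᵀ)), and the last two sums each have spectral norm at most τ. -/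

import Mathlib

open Matrix
open scoped Kronecker

noncomputable def specNorm {m n : Type*} [Fintype m] [Fintype n] [DecidableEq n]
    (M : Matrix m n ℝ) : ℝ :=
  ‖LinearMap.toContinuousLinearMap (Matrix.toEuclideanLin M)‖

noncomputable def frobNorm {m n : Type*} [Fintype m] [Fintype n]
    (M : Matrix m n ℝ) : ℝ :=
  Real.sqrt (∑ i, ∑ j, (M i j) ^ 2)

open MeasureTheory

open scoped InnerProductSpace

/-! Expanding `(Ax)^{⊗4}` multilinearly gives
`M = Σ_{ijkl} E[xᵢxⱼxₖx_ℓ] (aᵢ ⊗ aⱼ)(aₖ ⊗ a_ℓ)ᵀ`. By the moment hypotheses only the full diagonal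
and the three ways of splitting `ijkl` into two pairs of distinct indices survive, and these
give the four terms of the decomposition. Each error term has the form `Σₛ cₛ uₛ wₛᵀ` with
`(uₛ)`, `(wₛ)` orthonormal families of Kronecker products `aᵢ ⊗ aⱼ` and `0 ≤ cₛ ≤ τ`, so by
Bessel's inequality it maps `v` to a vector of norm at most `τ ‖v‖`. -/

theorem Orthonormal.norm_sum_smul_inner_smul_le {ι E F : Type*}
    [NormedAddCommGroup E] [InnerProductSpace ℝ E] [NormedAddCommGroup F] [InnerProductSpace ℝ F]
    {u : ι → F} {w : ι → E} (hu : Orthonormal ℝ u) (hw : Orthonormal ℝ w) (S : Finset ι)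
    {c : ι → ℝ} {τ : ℝ} (hτ : 0 ≤ τ) (hc : ∀ s ∈ S, |c s| ≤ τ) (v : E) :
    ‖∑ s ∈ S, (c s * ⟪w s, v⟫_ℝ) • u s‖ ≤ τ * ‖v‖ := by
  refine le_of_pow_le_pow_left₀ two_ne_zero (by positivity) ?_
  calc ‖∑ s ∈ S, (c s * ⟪w s, v⟫_ℝ) • u s‖ ^ 2
      = ∑ s ∈ S, c s ^ 2 * ⟪w s, v⟫_ℝ ^ 2 := by
        rw [← real_inner_self_eq_norm_sq, hu.inner_sum]
        exact Finset.sum_congr rfl fun s _ => by simp only [conj_trivial]; ring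
    _ ≤ ∑ s ∈ S, τ ^ 2 * ⟪w s, v⟫_ℝ ^ 2 := by
        refine Finset.sum_le_sum fun s hs => mul_le_mul_of_nonneg_right ?_ (sq_nonneg _)
        exact sq_le_sq' (abs_le.mp (hc s hs)).1 (abs_le.mp (hc s hs)).2
    _ = τ ^ 2 * ∑ s ∈ S, ‖⟪w s, v⟫_ℝ‖ ^ 2 := by
        simp only [Real.norm_eq_abs, sq_abs, Finset.mul_sum]
    _ ≤ (τ * ‖v‖) ^ 2 := by
        rw [mul_pow]
        exact mul_le_mul_of_nonneg_left (hw.sum_inner_products_le v) (sq_nonneg τ)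

theorem toEuclideanLin_vecMulVec {m : Type*} [Fintype m] [DecidableEq m]
    (u w : m → ℝ) (v : EuclideanSpace ℝ m) :
    toEuclideanLin (vecMulVec u w) v = ⟪WithLp.toLp 2 w, v⟫_ℝ • WithLp.toLp 2 u := by
  rw [toLpLin_apply, vecMulVec_mulVec, op_smul_eq_smul, EuclideanSpace.inner_eq_star_dotProduct,
    star_trivial, dotProduct_comm, WithLp.toLp_smul]

theorem toEuclideanLin_sum_smul_vecMulVec {m ι : Type*} [Fintype m] [DecidableEq m]
    (u w : ι → m → ℝ) (S : Finset ι) (c : ι → ℝ) (v : EuclideanSpace ℝ m) :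
    toEuclideanLin (∑ s ∈ S, c s • vecMulVec (u s) (w s)) v
      = ∑ s ∈ S, (c s * ⟪WithLp.toLp 2 (w s), v⟫_ℝ) • WithLp.toLp 2 (u s) := by
  simp only [map_sum, map_smul, LinearMap.sum_apply, LinearMap.smul_apply,
    toEuclideanLin_vecMulVec, smul_smul]

theorem specNorm_sum_smul_vecMulVec_le {m ι : Type*} [Fintype m] [DecidableEq m]
    {u w : ι → m → ℝ} (hu : Orthonormal ℝ fun s => WithLp.toLp 2 (u s))
    (hw : Orthonormal ℝ fun s => WithLp.toLp 2 (w s)) (S : Finset ι)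
    {c : ι → ℝ} {τ : ℝ} (hτ : 0 ≤ τ) (hc : ∀ s ∈ S, |c s| ≤ τ) :
    specNorm (∑ s ∈ S, c s • vecMulVec (u s) (w s)) ≤ τ := by
  refine ContinuousLinearMap.opNorm_le_bound _ hτ fun v => ?_
  rw [LinearMap.coe_toContinuousLinearMap', toEuclideanLin_sum_smul_vecMulVec]
  exact hu.norm_sum_smul_inner_smul_le hw S hτ hc v

theorem orthonormal_toLp_iff {m ι : Type*} [Fintype m] [DecidableEq ι] {a : ι → m → ℝ} :
    Orthonormal ℝ (fun i => WithLp.toLp 2 (a i)) ↔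
      ∀ i j, a i ⬝ᵥ a j = if i = j then (1 : ℝ) else 0 := by
  simp only [orthonormal_iff_ite, EuclideanSpace.inner_toLp_toLp, star_trivial]
  exact ⟨fun h i j => by rw [dotProduct_comm, h], fun h i j => by rw [dotProduct_comm, h]⟩

def vecKron {m n R : Type*} [Mul R] (u : m → R) (v : n → R) : m × n → R :=
  fun p => u p.1 * v p.2

theorem vecKron_dotProduct_vecKron {m n R : Type*} [Fintype m] [Fintype n] [CommSemiring R]
    (u u' : m → R) (v v' : n → R) :
    vecKron u v ⬝ᵥ vecKron u' v' = (u ⬝ᵥ u') * (v ⬝ᵥ v') := by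
  simp only [vecKron, dotProduct, Fintype.sum_prod_type, Finset.sum_mul_sum]
  exact Finset.sum_congr rfl fun _ _ => Finset.sum_congr rfl fun _ _ => by ring

theorem vecMulVec_kronecker_vecMulVec {l m n p R : Type*} [CommSemiring R]
    (u : l → R) (w : m → R) (u' : n → R) (w' : p → R) :
    vecMulVec u w ⊗ₖ vecMulVec u' w' = vecMulVec (vecKron u u') (vecKron w w') := by
  ext ⟨i, i'⟩ ⟨j, j'⟩
  simp only [kroneckerMap_apply, vecMulVec_apply, vecKron]
  ring

theorem Orthonormal.vecKron {m n ι κ : Type*} [Fintype m] [Fintype n]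
    {a : ι → m → ℝ} {b : κ → n → ℝ} (ha : Orthonormal ℝ fun i => WithLp.toLp 2 (a i))
    (hb : Orthonormal ℝ fun j => WithLp.toLp 2 (b j)) :
    Orthonormal ℝ fun p : ι × κ => WithLp.toLp 2 (vecKron (a p.1) (b p.2)) := by
  classical
  rw [orthonormal_toLp_iff] at ha hb ⊢
  intro p q
  rw [vecKron_dotProduct_vecKron, ha, hb]
  simp only [Prod.ext_iff, ite_zero_mul_ite_zero, one_mul]

/-- The fourth-moment tensor `E[xᵢxⱼxₖx_ℓ]` of a vector with `E[xᵢ⁴] = 1`, `E[xᵢ²xⱼ²] = m i j` and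
all other mixed moments zero: one summand per way `ijkl` can be a square. -/
def pairMomentTensor {ι : Type*} [DecidableEq ι] (m : ι → ι → ℝ) (i j k l : ι) : ℝ :=
  (if i = j ∧ j = k ∧ k = l then 1 else 0) + (if i = j ∧ k = l ∧ i ≠ k then m i k else 0) +
    (if i = k ∧ j = l ∧ i ≠ j then m i j else 0) + (if i = l ∧ j = k ∧ i ≠ j then m j i else 0)

theorem sum_filter_fst_ne_snd {ι M : Type*} [Fintype ι] [DecidableEq ι] [AddCommMonoid M]
    (g : ι × ι → M) :
    ∑ pr ∈ Finset.univ.filter (fun pr : ι × ι => pr.1 ≠ pr.2), g pr =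
      ∑ i, ∑ j, if i ≠ j then g (i, j) else 0 := by
  rw [Finset.sum_filter, Fintype.sum_prod_type]

theorem sum_pairMomentTensor_smul {ι V : Type*} [Fintype ι] [DecidableEq ι] [AddCommMonoid V]
    [Module ℝ V] (m : ι → ι → ℝ) (F : ι → ι → ι → ι → V) :
    ∑ i, ∑ j, ∑ k, ∑ l, pairMomentTensor m i j k l • F i j k l =
      ∑ i, F i i i i +
        ∑ pr ∈ Finset.univ.filter (fun pr : ι × ι => pr.1 ≠ pr.2),
          m pr.1 pr.2 • F pr.1 pr.1 pr.2 pr.2 +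
        ∑ pr ∈ Finset.univ.filter (fun pr : ι × ι => pr.1 ≠ pr.2),
          m pr.1 pr.2 • F pr.1 pr.2 pr.1 pr.2 +
        ∑ pr ∈ Finset.univ.filter (fun pr : ι × ι => pr.1 ≠ pr.2),
          m pr.1 pr.2 • F pr.2 pr.1 pr.1 pr.2 := by
  simp only [sum_filter_fst_ne_snd, pairMomentTensor, add_smul, ite_smul, zero_smul, one_smul,
    Finset.sum_add_distrib, ite_and, Finset.sum_ite_eq, Finset.mem_univ, if_true,
    Finset.sum_ite_irrel, Finset.sum_const_zero]
  congr 1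
  rw [Finset.sum_comm]
  exact Fintype.sum_congr _ _ fun i => Fintype.sum_congr _ _ fun j => by simp only [ne_comm]

section Moments

variable {Ω ι : Type*} [MeasurableSpace Ω] {μ : Measure Ω} {x : Ω → ι → ℝ}

theorem integral_sum_mul_sum_mul_sum_mul_sum [Fintype ι]
    (hint : ∀ i j k l, Integrable (fun ω => x ω i * x ω j * x ω k * x ω l) μ)
    (b c e f : ι → ℝ) :
    ∫ ω, (∑ i, x ω i * b i) * (∑ j, x ω j * c j) * (∑ k, x ω k * e k) * (∑ l, x ω l * f l) ∂μ =
      ∑ i, ∑ j, ∑ k, ∑ l, (∫ ω, x ω i * x ω j * x ω k * x ω l ∂μ) * (b i * c j * e k * f l) := by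
  have hexpand : ∀ ω, (∑ i, x ω i * b i) * (∑ j, x ω j * c j) * (∑ k, x ω k * e k) *
      (∑ l, x ω l * f l) =
        ∑ i, ∑ j, ∑ k, ∑ l, x ω i * x ω j * x ω k * x ω l * (b i * c j * e k * f l) := by
    intro ω
    rw [mul_assoc, mul_assoc]
    simp only [Finset.sum_mul]
    simp only [Finset.mul_sum]
    exact Fintype.sum_congr _ _ fun i => Fintype.sum_congr _ _ fun j =>
      Fintype.sum_congr _ _ fun k => Fintype.sum_congr _ _ fun l => by ring
  have hterm (i j k l : ι) := (hint i j k l).mul_const (b i * c j * e k * f l)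
  simp_rw [hexpand]
  rw [integral_finsetSum _ fun i _ => integrable_finsetSum _ fun j _ =>
    integrable_finsetSum _ fun k _ => integrable_finsetSum _ fun l _ => hterm i j k l]
  refine Fintype.sum_congr _ _ fun i => ?_
  rw [integral_finsetSum _ fun j _ => integrable_finsetSum _ fun k _ =>
    integrable_finsetSum _ fun l _ => hterm i j k l]
  refine Fintype.sum_congr _ _ fun j => ?_
  rw [integral_finsetSum _ fun k _ => integrable_finsetSum _ fun l _ => hterm i j k l]
  refine Fintype.sum_congr _ _ fun k => ?_
  rw [integral_finsetSum _ fun l _ => hterm i j k l]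
  exact Fintype.sum_congr _ _ fun l => integral_mul_const _ _

theorem integral_mul_mul_mul_eq_pairMomentTensor [DecidableEq ι]
    (h4 : ∀ i, ∫ ω, x ω i ^ 4 ∂μ = 1)
    (hsq : ∀ i j k l, ¬ ((i = j ∧ k = l) ∨ (i = k ∧ j = l) ∨ (i = l ∧ j = k)) →
      ∫ ω, x ω i * x ω j * x ω k * x ω l ∂μ = 0) (i j k l : ι) :
    ∫ ω, x ω i * x ω j * x ω k * x ω l ∂μ =
      pairMomentTensor (fun i j => ∫ ω, x ω i ^ 2 * x ω j ^ 2 ∂μ) i j k l := by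
  by_cases hdiag : i = j ∧ j = k ∧ k = l
  · obtain ⟨rfl, rfl, rfl⟩ := hdiag
    calc ∫ ω, x ω i * x ω i * x ω i * x ω i ∂μ = ∫ ω, x ω i ^ 4 ∂μ := by
          congr 1 with ω; ring
      _ = _ := by simp [pairMomentTensor, h4]
  by_cases hij : i = j ∧ k = l
  · obtain ⟨rfl, rfl⟩ := hij
    have hik : i ≠ k := fun h => hdiag ⟨rfl, h, rfl⟩
    calc ∫ ω, x ω i * x ω i * x ω k * x ω k ∂μ = ∫ ω, x ω i ^ 2 * x ω k ^ 2 ∂μ := by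
          congr 1 with ω; ring
      _ = _ := by simp [pairMomentTensor, hik]
  by_cases hik : i = k ∧ j = l
  · obtain ⟨rfl, rfl⟩ := hik
    have hij : i ≠ j := fun h => hdiag ⟨h, h.symm, h⟩
    calc ∫ ω, x ω i * x ω j * x ω i * x ω j ∂μ = ∫ ω, x ω i ^ 2 * x ω j ^ 2 ∂μ := by
          congr 1 with ω; ring
      _ = _ := by simp [pairMomentTensor, hij]
  by_cases hil : i = l ∧ j = k
  · obtain ⟨rfl, rfl⟩ := hil
    have hij : i ≠ j := fun h => hdiag ⟨h, rfl, h.symm⟩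
    calc ∫ ω, x ω i * x ω j * x ω j * x ω i ∂μ = ∫ ω, x ω j ^ 2 * x ω i ^ 2 ∂μ := by
          congr 1 with ω; ring
      _ = _ := by simp [pairMomentTensor, hij]
  rw [hsq i j k l (by tauto), pairMomentTensor]
  split_ifs <;> simp_all

end Moments

theorem fourth_moment_decomposition_general {d n : ℕ} (τ : ℝ) (hτ : 0 ≤ τ)
    (a : Fin n → Fin d → ℝ)
    (ha : ∀ i j, a i ⬝ᵥ a j = if i = j then (1 : ℝ) else 0)
    {Ω : Type} [MeasureSpace Ω]
    (x : Ω → Fin n → ℝ)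
    (hint : ∀ i j k l, Integrable (fun ω => x ω i * x ω j * x ω k * x ω l))
    (h4 : ∀ i, ∫ ω, (x ω i) ^ 4 = 1)
    (hsq : ∀ i j k l, ¬ ((i = j ∧ k = l) ∨ (i = k ∧ j = l) ∨ (i = l ∧ j = k)) →
      ∫ ω, x ω i * x ω j * x ω k * x ω l = 0)
    (hτij : ∀ i j, i ≠ j → ∫ ω, (x ω i) ^ 2 * (x ω j) ^ 2 ≤ τ)
    (M M2 M3 : Matrix (Fin d × Fin d) (Fin d × Fin d) ℝ)
    -- `M` is the flattening of `E[(Ax)^{⊗4}]` along modes `{1,2},{3,4}`: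
    (hM : ∀ p q : Fin d × Fin d, M p q =
      ∫ ω, (∑ i, x ω i * a i p.1) * (∑ i, x ω i * a i p.2) *
        (∑ i, x ω i * a i q.1) * (∑ i, x ω i * a i q.2))
    -- `M2 = Σ_{i≠j} E[xᵢ²xⱼ²] (aᵢaᵢᵀ) ⊗ (aⱼaⱼᵀ)`:
    (hM2 : M2 = ∑ pr ∈ Finset.univ.filter (fun pr : Fin n × Fin n => pr.1 ≠ pr.2),
      (∫ ω, (x ω pr.1) ^ 2 * (x ω pr.2) ^ 2) •
        (Matrix.vecMulVec (a pr.1) (a pr.1) ⊗ₖ Matrix.vecMulVec (a pr.2) (a pr.2)))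
    -- `M3 = Σ_{i≠j} E[xᵢ²xⱼ²] (aⱼaᵢᵀ) ⊗ (aᵢaⱼᵀ)`:
    (hM3 : M3 = ∑ pr ∈ Finset.univ.filter (fun pr : Fin n × Fin n => pr.1 ≠ pr.2),
      (∫ ω, (x ω pr.1) ^ 2 * (x ω pr.2) ^ 2) •
        (Matrix.vecMulVec (a pr.2) (a pr.1) ⊗ₖ Matrix.vecMulVec (a pr.1) (a pr.2))) :
    M = (∑ i, Matrix.vecMulVec (fun p : Fin d × Fin d => a i p.1 * a i p.2)
          (fun p : Fin d × Fin d => a i p.1 * a i p.2)) +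
        (∑ pr ∈ Finset.univ.filter (fun pr : Fin n × Fin n => pr.1 ≠ pr.2),
          (∫ ω, (x ω pr.1) ^ 2 * (x ω pr.2) ^ 2) •
            Matrix.vecMulVec (fun p : Fin d × Fin d => a pr.1 p.1 * a pr.1 p.2)
              (fun p : Fin d × Fin d => a pr.2 p.1 * a pr.2 p.2)) +
        M2 + M3 ∧
      specNorm M2 ≤ τ ∧ specNorm M3 ≤ τ := by
  have hortho : Orthonormal ℝ fun i => WithLp.toLp 2 (a i) := orthonormal_toLp_iff.mpr ha
  have hkron := hortho.vecKron hortho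
  have hmoments : M = ∑ i, ∑ j, ∑ k, ∑ l,
      pairMomentTensor (fun i j => ∫ ω, x ω i ^ 2 * x ω j ^ 2) i j k l •
        vecMulVec (vecKron (a i) (a j)) (vecKron (a k) (a l)) := by
    ext p q
    rw [hM, integral_sum_mul_sum_mul_sum_mul_sum hint]
    simp only [integral_mul_mul_mul_eq_pairMomentTensor h4 hsq]
    simp only [Matrix.sum_apply, Matrix.smul_apply, vecMulVec_apply, vecKron, smul_eq_mul,
      mul_assoc]
  have hcoeff : ∀ pr ∈ Finset.univ.filter (fun pr : Fin n × Fin n => pr.1 ≠ pr.2),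
      |∫ ω, x ω pr.1 ^ 2 * x ω pr.2 ^ 2| ≤ τ := fun pr hpr => by
    rw [abs_of_nonneg (integral_nonneg fun ω => by positivity)]
    exact hτij pr.1 pr.2 (Finset.mem_filter.mp hpr).2
  simp only [vecMulVec_kronecker_vecMulVec] at hM2 hM3
  refine ⟨?_, ?_, ?_⟩
  · rw [hmoments, sum_pairMomentTensor_smul, hM2, hM3]
    rfl
  · rw [hM2]
    exact specNorm_sum_smul_vecMulVec_le hkron hkron _ hτ hcoeff
  · rw [hM3]
    exact specNorm_sum_smul_vecMulVec_le (hkron.comp Prod.swap Prod.swap_injective) hkron _ hτ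
      hcoeff

/-- Decomposition of the flattened fourth moment matrix `E[(Ax)^{⊗4}]` for a dictionary
with orthonormal columns and a distribution with the stated fourth-moment structure;
the two structured error terms have spectral norm at most `τ`. -/
theorem fourth_moment_decomposition {d n : ℕ} (τ : ℝ) (hτ : 0 ≤ τ)
    (a : Fin n → Fin d → ℝ)
    (ha : ∀ i j, a i ⬝ᵥ a j = if i = j then (1 : ℝ) else 0)
    {Ω : Type} [MeasureSpace Ω] [IsProbabilityMeasure (volume : Measure Ω)]
    (x : Ω → Fin n → ℝ)
    (hint : ∀ i j k l, Integrable (fun ω => x ω i * x ω j * x ω k * x ω l))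
    (h4 : ∀ i, ∫ ω, (x ω i) ^ 4 = 1)
    (hsq : ∀ i j k l, ¬ ((i = j ∧ k = l) ∨ (i = k ∧ j = l) ∨ (i = l ∧ j = k)) →
      ∫ ω, x ω i * x ω j * x ω k * x ω l = 0)
    (hτij : ∀ i j, i ≠ j → ∫ ω, (x ω i) ^ 2 * (x ω j) ^ 2 ≤ τ)
    (M M2 M3 : Matrix (Fin d × Fin d) (Fin d × Fin d) ℝ)
    -- `M` is the flattening of `E[(Ax)^{⊗4}]` along modes `{1,2},{3,4}`:
    (hM : ∀ p q : Fin d × Fin d, M p q =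
      ∫ ω, (∑ i, x ω i * a i p.1) * (∑ i, x ω i * a i p.2) *
        (∑ i, x ω i * a i q.1) * (∑ i, x ω i * a i q.2))
    -- `M2 = Σ_{i≠j} E[xᵢ²xⱼ²] (aᵢaᵢᵀ) ⊗ (aⱼaⱼᵀ)`:
    (hM2 : M2 = ∑ pr ∈ Finset.univ.filter (fun pr : Fin n × Fin n => pr.1 ≠ pr.2),
      (∫ ω, (x ω pr.1) ^ 2 * (x ω pr.2) ^ 2) •
        (Matrix.vecMulVec (a pr.1) (a pr.1) ⊗ₖ Matrix.vecMulVec (a pr.2) (a pr.2)))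
    -- `M3 = Σ_{i≠j} E[xᵢ²xⱼ²] (aⱼaᵢᵀ) ⊗ (aᵢaⱼᵀ)`:
    (hM3 : M3 = ∑ pr ∈ Finset.univ.filter (fun pr : Fin n × Fin n => pr.1 ≠ pr.2),
      (∫ ω, (x ω pr.1) ^ 2 * (x ω pr.2) ^ 2) •
        (Matrix.vecMulVec (a pr.2) (a pr.1) ⊗ₖ Matrix.vecMulVec (a pr.1) (a pr.2))) :
    M = (∑ i, Matrix.vecMulVec (fun p : Fin d × Fin d => a i p.1 * a i p.2)
          (fun p : Fin d × Fin d => a i p.1 * a i p.2)) +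
        (∑ pr ∈ Finset.univ.filter (fun pr : Fin n × Fin n => pr.1 ≠ pr.2),
          (∫ ω, (x ω pr.1) ^ 2 * (x ω pr.2) ^ 2) •
            Matrix.vecMulVec (fun p : Fin d × Fin d => a pr.1 p.1 * a pr.1 p.2)
              (fun p : Fin d × Fin d => a pr.2 p.1 * a pr.2 p.2)) +
        M2 + M3 ∧
      specNorm M2 ≤ τ ∧ specNorm M3 ≤ τ :=
  fourth_moment_decomposition_general τ hτ a ha x hint h4 hsq hτij M M2 M3 hM hM2 hM3
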